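/- arXiv:1810.09169 — 2 statements merged into one kernel-verified Lean document; each statement's English description precedes it below -/
import Mathlib

section
/- Let E be an acyclic directed graph (containing no cycles). Then there exists a Hausdorff CLP-compact topological semigroup containing G(E) as a dense subsemigroup if and only if the multiplication of G(E) is jointly continuous with respect to the topology τ_c; moreover, in that case every Hausdorff CLP-compact topological semigroup containing G(E) as a dense subsemigroup equals G(E) with the topology τ_c, and is compact. -/
/-! Preamble: graph inverse semigroups and compactness-type properties. -/

namespace GISPaper

variable {V E : Type*}

/-- `IsPathFrom src rng v l` means that the list of edges `l` is composable
and starts at the vertex `v`. -/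
def IsPathFrom (src rng : E → V) : V → List E → Prop
  | _, [] => True
  | v, e :: l => src e = v ∧ IsPathFrom src rng (rng e) l

/-- The end vertex of a list of edges starting at the vertex `v`. -/
def pathEnd (rng : E → V) : V → List E → V
  | v, [] => v
  | _, e :: l => pathEnd rng (rng e) l

theorem pathEnd_append (rng : E → V) (v : V) (l₁ l₂ : List E) :
    pathEnd rng v (l₁ ++ l₂) = pathEnd rng (pathEnd rng v l₁) l₂ := by
  induction l₁ generalizing v with
  | nil => rfl
  | cons e l ih => simpa [pathEnd] using ih (rng e)

theorem isPathFrom_append (src rng : E → V) (v : V) (l₁ l₂ : List E) :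
    IsPathFrom src rng v (l₁ ++ l₂) ↔
      IsPathFrom src rng v l₁ ∧ IsPathFrom src rng (pathEnd rng v l₁) l₂ := by
  induction l₁ generalizing v with
  | nil => simp [IsPathFrom, pathEnd]
  | cons e l ih => simp [IsPathFrom, pathEnd, ih (rng e), and_assoc]

/-- A (directed) path in the graph `(V, E, src, rng)`: a starting vertex together
with a composable list of edges (a path of length zero is just a vertex). -/
structure GPath (src rng : E → V) where
  start : V
  edges : List E
  isPath : IsPathFrom src rng start edges

/-- The range (end vertex) of a path. -/
def GPath.range {src rng : E → V} (p : GPath src rng) : V :=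
  pathEnd rng p.start p.edges

/-- The nonzero elements of the graph inverse semigroup: pairs `u v⁻¹` of paths
with `r u = r v`. -/
def GISElem (src rng : E → V) : Type _ :=
  {p : GPath src rng × GPath src rng // p.1.range = p.2.range}

/-- The graph inverse semigroup over the graph `(V, E, src, rng)`: the nonzero
elements `u v⁻¹` together with a zero element (represented by `none`). -/
def GIS (src rng : E → V) : Type _ := Option (GISElem src rng)

instance {src rng : E → V} : Zero (GIS src rng) :=
  ⟨(none : Option (GISElem src rng))⟩

open Classical in
/-- The multiplication of a graph inverse semigroup:
`u₁v₁⁻¹ · u₂v₂⁻¹ = u₁w v₂⁻¹` if `u₂ = v₁ w`, `u₁v₁⁻¹ · u₂v₂⁻¹ = u₁ (v₂ w)⁻¹` if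
`v₁ = u₂ w`, and `0` otherwise; `0` is absorbing. -/
noncomputable def GIS.mul {src rng : E → V} :
    Option (GISElem src rng) → Option (GISElem src rng) → Option (GISElem src rng)
  | some ⟨(u₁, v₁), h₁⟩, some ⟨(u₂, v₂), h₂⟩ =>
    if h : v₁.start = u₂.start ∧ v₁.edges <+: u₂.edges then
      some ⟨(⟨u₁.start, u₁.edges ++ u₂.edges.drop v₁.edges.length, by
        obtain ⟨hs, t, ht⟩ := h
        have hdrop : u₂.edges.drop v₁.edges.length = t := by
          rw [← ht, List.drop_left]
        have hu₂ := u₂.isPath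
        rw [← ht, isPathFrom_append] at hu₂
        rw [hdrop, isPathFrom_append]
        refine ⟨u₁.isPath, ?_⟩
        have he : pathEnd rng u₁.start u₁.edges = pathEnd rng u₂.start v₁.edges := by
          rw [← hs]; exact h₁
        rw [he]; exact hu₂.2⟩, v₂), by
        show pathEnd rng u₁.start (u₁.edges ++ u₂.edges.drop v₁.edges.length) = v₂.range
        obtain ⟨hs, t, ht⟩ := h
        have hdrop : u₂.edges.drop v₁.edges.length = t := by
          rw [← ht, List.drop_left]
        rw [hdrop, pathEnd_append]
        have he : pathEnd rng u₁.start u₁.edges = pathEnd rng u₂.start v₁.edges := by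
          rw [← hs]; exact h₁
        rw [he, ← pathEnd_append, ht]
        exact h₂⟩
    else if h' : u₂.start = v₁.start ∧ u₂.edges <+: v₁.edges then
      some ⟨(u₁, ⟨v₂.start, v₂.edges ++ v₁.edges.drop u₂.edges.length, by
        obtain ⟨hs, t, ht⟩ := h'
        have hdrop : v₁.edges.drop u₂.edges.length = t := by
          rw [← ht, List.drop_left]
        have hv₁ := v₁.isPath
        rw [← ht, isPathFrom_append] at hv₁
        rw [hdrop, isPathFrom_append]
        refine ⟨v₂.isPath, ?_⟩
        have he : pathEnd rng v₂.start v₂.edges = pathEnd rng v₁.start u₂.edges := by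
          rw [← hs]; exact h₂.symm
        rw [he]; exact hv₁.2⟩), by
        show u₁.range = pathEnd rng v₂.start (v₂.edges ++ v₁.edges.drop u₂.edges.length)
        obtain ⟨hs, t, ht⟩ := h'
        have hdrop : v₁.edges.drop u₂.edges.length = t := by
          rw [← ht, List.drop_left]
        have he : pathEnd rng v₂.start v₂.edges = pathEnd rng v₁.start u₂.edges := by
          rw [← hs]; exact h₂.symm
        rw [hdrop, pathEnd_append, he, ← pathEnd_append, ht]
        exact h₁⟩
    else none
  | _, _ => none

noncomputable instance {src rng : E → V} : Mul (GIS src rng) := ⟨GIS.mul⟩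

theorem GIS.zero_mul {src rng : E → V} (x : GIS src rng) : 0 * x = 0 := rfl

/-- The topology in which every nonzero point is isolated and the open
neighbourhoods of `0` are exactly the cofinite sets containing `0`. -/
def tauC (α : Type*) [Zero α] : TopologicalSpace α where
  IsOpen U := (0 : α) ∈ U → Uᶜ.Finite
  isOpen_univ := by simp
  isOpen_inter U W hU hW h := by
    rw [Set.compl_inter]
    exact (hU h.1).union (hW h.2)
  isOpen_sUnion 𝒮 h h0 := by
    obtain ⟨U, hU, hU0⟩ := h0
    exact (h U hU hU0).subset (Set.compl_subset_compl.mpr (Set.subset_sUnion_of_mem hU))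

/-- A topological space is CLP-compact if every cover by clopen sets has a
finite subcover. -/
def CLPCompact (X : Type*) [TopologicalSpace X] : Prop :=
  ∀ 𝒰 : Set (Set X), (∀ U ∈ 𝒰, IsClopen U) → ⋃₀ 𝒰 = Set.univ →
    ∃ ℱ ⊆ 𝒰, ℱ.Finite ∧ ⋃₀ ℱ = Set.univ

/-- A topological space is countably compact if every infinite subset has an
accumulation point. -/
def CountablyCompactSpace (X : Type*) [TopologicalSpace X] : Prop :=
  ∀ B : Set X, B.Infinite → ∃ x : X, AccPt x (Filter.principal B)

/-- A topological space is feebly compact if every locally finite family of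
nonempty open sets is finite. -/
def FeeblyCompact (X : Type*) [TopologicalSpace X] : Prop :=
  ∀ 𝒰 : Set (Set X), (∀ U ∈ 𝒰, IsOpen U ∧ U.Nonempty) →
    (∀ x : X, ∃ N ∈ nhds x, {U ∈ 𝒰 | (U ∩ N).Nonempty}.Finite) → 𝒰.Finite

/-- The multiplication of the bicyclic monoid on `ℕ × ℕ`. -/
def bicyclicMul (x y : ℕ × ℕ) : ℕ × ℕ :=
  (x.1 + y.1 - min x.2 y.1, x.2 + y.2 - min x.2 y.1)

/-- The multiplication of the semigroup of `X × X`-matrix units (with zero `none`). -/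
def matUnitsMul {X : Type*} [DecidableEq X] :
    Option (X × X) → Option (X × X) → Option (X × X)
  | some (a, b), some (c, d) => if b = c then some (a, d) else none
  | _, _ => none

/-- A cycle based at the vertex `e`: a path of nonzero length from `e` to `e`. -/
def HasCycleAt (src rng : E → V) (e : V) : Prop :=
  ∃ p : GPath src rng, p.edges ≠ [] ∧ p.start = e ∧ p.range = e

end GISPaper

/-!
`u v⁻¹` acts on paths as the partial map `v t ↦ u t`; this representation of `G(E)` is
faithful and turns multiplication into composition, whence associativity.

Let `S` be a Hausdorff CLP-compact topological semigroup containing `G(E)` densely; by density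
`0` is a zero of `S`. In a CLP-compact T₁ space an infinite set of isolated points has a point
each neighbourhood of which contains infinitely many of them. With continuity of multiplication
this shows that an infinite family of isolated idempotents with pairwise products `0` tends to
`0`, and so does an infinite family of isolated points `x_n` with `x_n b_n = x_n` (or
`b_n x_n = x_n`) and `b_n → 0`.

Acyclicity makes every element near a vertex an idempotent, which forces the vertices to be
isolated; then every `u v⁻¹` is isolated, since `s ↦ u⁻¹ s v` maps only finitely many elements
of `G(E)` to the vertex `r(u)`. An infinite family of idempotents `p p⁻¹` has an infinite
subfamily in which either all `p` have the same range (so the idempotents are pairwise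
orthogonal) or the ranges are distinct (so `r(p) → 0`, hence `p⁻¹ → 0`, `p → 0` and
`p p⁻¹ → 0`); likewise a family `u v⁻¹`, fixed by `u u⁻¹` on the left and by `v v⁻¹` on the
right, tends to `0`. So `G(E)` converges to `0` along the cofinite filter: `S` has no point
outside `G(E)`, carries `τ_c` and is compact. Conversely `(G(E), τ_c)` is compact Hausdorff.
-/

namespace GISPaper

variable {V E : Type*} {src rng : E → V}

attribute [ext] GPath

def IsAcyclic (src rng : E → V) : Prop :=
  ∀ p : GPath src rng, p.edges ≠ [] → p.start ≠ p.range

namespace GPath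

def IsPrefix (v x : GPath src rng) : Prop :=
  v.start = x.start ∧ v.edges <+: x.edges

def vertex (src rng : E → V) (w : V) : GPath src rng := ⟨w, [], trivial⟩

@[simp] theorem vertex_start (w : V) : (vertex src rng w).start = w := rfl
@[simp] theorem vertex_edges (w : V) : (vertex src rng w).edges = [] := rfl
@[simp] theorem vertex_range (w : V) : (vertex src rng w).range = w := rfl

theorem isPathFrom_glue (u x v : GPath src rng) (h : u.range = v.range) (hvx : v.IsPrefix x) :
    IsPathFrom src rng u.start (u.edges ++ x.edges.drop v.edges.length) := by
  obtain ⟨hs, t, ht⟩ := hvx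
  have hx := x.isPath
  rw [← ht, isPathFrom_append, ← hs] at hx
  rw [← ht, List.drop_left, isPathFrom_append]
  have he : pathEnd rng u.start u.edges = pathEnd rng v.start v.edges := h
  exact ⟨u.isPath, he ▸ hx.2⟩

/-- The path `u t`, where `x = v t`. -/
def glue (u x v : GPath src rng) (h : u.range = v.range) (hvx : v.IsPrefix x) : GPath src rng :=
  ⟨u.start, u.edges ++ x.edges.drop v.edges.length, isPathFrom_glue u x v h hvx⟩

@[simp] theorem glue_start (u x v : GPath src rng) (h hvx) :
    (glue u x v h hvx).start = u.start := rfl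

@[simp] theorem glue_edges (u x v : GPath src rng) (h hvx) :
    (glue u x v h hvx).edges = u.edges ++ x.edges.drop v.edges.length := rfl

theorem glue_range (u x v : GPath src rng) (h hvx) : (glue u x v h hvx).range = x.range := by
  obtain ⟨hs, t, ht⟩ := hvx
  show pathEnd rng u.start (u.edges ++ x.edges.drop v.edges.length) = pathEnd rng x.start x.edges
  rw [← ht, List.drop_left, pathEnd_append, pathEnd_append, ← hs]
  exact congrArg (pathEnd rng · t) h

theorem IsPrefix.refl (p : GPath src rng) : p.IsPrefix p := ⟨rfl, List.prefix_refl _⟩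

theorem IsPrefix.antisymm {p q : GPath src rng} (hpq : p.IsPrefix q) (hqp : q.IsPrefix p) :
    p = q :=
  GPath.ext hpq.1 (hpq.2.eq_of_length_le hqp.2.length_le)

theorem finite_setOf_isPrefix (p : GPath src rng) : {q : GPath src rng | q.IsPrefix p}.Finite := by
  refine Set.Finite.of_finite_image (f := fun q => q.edges.length)
    ((Set.finite_Iic p.edges.length).subset ?_) ?_
  · rintro _ ⟨q, hq, rfl⟩
    exact hq.2.length_le
  · intro q hq q' hq' hlen
    refine GPath.ext (hq.1.trans hq'.1.symm) ?_
    rw [List.prefix_iff_eq_take.mp hq.2, List.prefix_iff_eq_take.mp hq'.2]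
    exact congrArg (p.edges.take ·) hlen

theorem eq_of_isPrefix_of_range_eq (hE : IsAcyclic src rng) {p q : GPath src rng}
    (hpq : p.IsPrefix q) (hr : p.range = q.range) : p = q := by
  obtain ⟨hs, t, ht⟩ := hpq
  have hq := q.isPath
  rw [← ht, ← hs, isPathFrom_append] at hq
  by_cases htn : t = []
  · exact GPath.ext hs (by rw [← ht, htn, List.append_nil])
  · refine absurd ?_ (hE ⟨p.range, t, hq.2⟩ htn)
    calc p.range = q.range := hr
      _ = pathEnd rng p.range t := by
        show pathEnd rng q.start q.edges = _
        rw [← ht, ← hs, pathEnd_append]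
        rfl

end GPath

namespace GIS

open GPath

def mk (p q : GPath src rng) (h : p.range = q.range) : GIS src rng := some ⟨(p, q), h⟩

theorem mk_ne_zero (p q : GPath src rng) (h : p.range = q.range) : mk p q h ≠ 0 :=
  Option.some_ne_none _

theorem mk_inj {p q p' q' : GPath src rng} {h : p.range = q.range} {h' : p'.range = q'.range} :
    mk p q h = mk p' q' h' ↔ p = p' ∧ q = q' := by
  constructor
  · intro he
    have he := Option.some.inj he
    exact ⟨congrArg (·.1.1) he, congrArg (·.1.2) he⟩
  · rintro ⟨rfl, rfl⟩
    rfl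

theorem mk_mul_mk_of_isPrefix {u₁ v₁ u₂ v₂ : GPath src rng} (h₁ : u₁.range = v₁.range)
    (h₂ : u₂.range = v₂.range) (hc : v₁.IsPrefix u₂) :
    mk u₁ v₁ h₁ * mk u₂ v₂ h₂ = mk (glue u₁ u₂ v₁ h₁ hc) v₂ ((glue_range ..).trans h₂) :=
  dif_pos hc

theorem mk_mul_mk_of_isPrefix' {u₁ v₁ u₂ v₂ : GPath src rng} (h₁ : u₁.range = v₁.range)
    (h₂ : u₂.range = v₂.range) (hc₁ : ¬v₁.IsPrefix u₂) (hc₂ : u₂.IsPrefix v₁) :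
    mk u₁ v₁ h₁ * mk u₂ v₂ h₂ =
      mk u₁ (glue v₂ v₁ u₂ h₂.symm hc₂) (h₁.trans (glue_range ..).symm) :=
  (dif_neg hc₁).trans (dif_pos hc₂)

theorem mk_mul_mk_eq_zero {u₁ v₁ u₂ v₂ : GPath src rng} (h₁ : u₁.range = v₁.range)
    (h₂ : u₂.range = v₂.range) (hc₁ : ¬v₁.IsPrefix u₂) (hc₂ : ¬u₂.IsPrefix v₁) :
    mk u₁ v₁ h₁ * mk u₂ v₂ h₂ = 0 :=
  (dif_neg hc₁).trans (dif_neg hc₂)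

theorem mul_zero (a : GIS src rng) : a * 0 = 0 := by
  rcases a with _ | ⟨⟨u, v⟩, h⟩ <;> rfl

theorem mk_mul_mk_self (a b c : GPath src rng) (h₁ : a.range = b.range) (h₂ : b.range = c.range) :
    mk a b h₁ * mk b c h₂ = mk a c (h₁.trans h₂) := by
  rw [mk_mul_mk_of_isPrefix h₁ h₂ (IsPrefix.refl b), mk_inj]
  exact ⟨GPath.ext rfl (by simp), rfl⟩

open Classical in
/-- The partial map `v t ↦ u t` by which `u v⁻¹` acts on (start, edge list) pairs. -/
noncomputable def act : GIS src rng → V × List E → Option (V × List E)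
  | none, _ => none
  | some ⟨(u, v), _⟩, (w, l) =>
    if v.start = w ∧ v.edges <+: l then some (u.start, u.edges ++ l.drop v.edges.length) else none

theorem act_zero (x : V × List E) : act (0 : GIS src rng) x = none := rfl

open Classical in
theorem act_mk_eq_some_iff {u v : GPath src rng} (h : u.range = v.range) {x y : V × List E} :
    act (mk u v h) x = some y ↔
      ∃ t, x = (v.start, v.edges ++ t) ∧ y = (u.start, u.edges ++ t) := by
  obtain ⟨w, l⟩ := x
  show (if v.start = w ∧ v.edges <+: l then _ else none) = _ ↔ _
  split_ifs with hc
  · obtain ⟨rfl, t, rfl⟩ := hc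
    simp [eq_comm]
  · simp only [false_iff, not_exists, not_and]
    rintro t ⟨⟩ -
    exact hc ⟨rfl, t, rfl⟩

theorem act_mul (a b : GIS src rng) (x : V × List E) :
    act (a * b) x = (act b x).bind (act a) := by
  rcases a with _ | ⟨⟨u₁, v₁⟩, h₁⟩
  · cases act b x <;> rfl
  rcases b with _ | ⟨⟨u₂, v₂⟩, h₂⟩
  · exact congrArg (act · x) (mul_zero _)
  change act (mk u₁ v₁ h₁ * mk u₂ v₂ h₂) x = (act (mk u₂ v₂ h₂) x).bind (act (mk u₁ v₁ h₁))
  refine Option.ext fun y => ?_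
  simp only [Option.bind_eq_some_iff, act_mk_eq_some_iff]
  by_cases hc₁ : v₁.IsPrefix u₂
  · rw [mk_mul_mk_of_isPrefix h₁ h₂ hc₁, act_mk_eq_some_iff]
    obtain ⟨hs, s, hu⟩ := id hc₁
    simp only [glue_start, glue_edges, ← hu, List.drop_left, hs]
    constructor
    · rintro ⟨t, rfl, rfl⟩
      exact ⟨_, ⟨t, rfl, rfl⟩, s ++ t, by simp, by simp⟩
    · rintro ⟨_, ⟨t, rfl, rfl⟩, t', h, rfl⟩
      simp only [Prod.mk.injEq, List.append_assoc, List.append_cancel_left_eq] at h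
      exact ⟨t, rfl, by simp [h.2]⟩
  by_cases hc₂ : u₂.IsPrefix v₁
  · rw [mk_mul_mk_of_isPrefix' h₁ h₂ hc₁ hc₂, act_mk_eq_some_iff]
    obtain ⟨hs, s, hv⟩ := id hc₂
    simp only [glue_start, glue_edges, ← hv, List.drop_left, ← hs]
    constructor
    · rintro ⟨t, rfl, rfl⟩
      exact ⟨_, ⟨s ++ t, by simp, rfl⟩, t, by simp, rfl⟩
    · rintro ⟨_, ⟨t, rfl, rfl⟩, t', h, rfl⟩
      simp only [Prod.mk.injEq, List.append_assoc, List.append_cancel_left_eq, true_and] at h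
      exact ⟨t', by simp [h], rfl⟩
  · rw [mk_mul_mk_eq_zero h₁ h₂ hc₁ hc₂]
    simp only [act_zero, reduceCtorEq, false_iff, not_exists, not_and]
    rintro _ ⟨t, -, rfl⟩ t' h -
    simp only [Prod.mk.injEq, List.append_eq_append_iff] at h
    obtain ⟨hs, ⟨a, hv, -⟩ | ⟨c, hu, -⟩⟩ := h
    · exact hc₂ ⟨hs, a, hv.symm⟩
    · exact hc₁ ⟨hs.symm, c, hu.symm⟩

theorem act_mk_self {u v : GPath src rng} (h : u.range = v.range) :
    act (mk u v h) (v.start, v.edges) = some (u.start, u.edges) :=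
  (act_mk_eq_some_iff h).2 ⟨[], by simp, by simp⟩

theorem act_injective : Function.Injective (act : GIS src rng → _) := by
  have key : ∀ {u v u' v' : GPath src rng} (h : u.range = v.range) (h' : u'.range = v'.range),
      act (mk u v h) = act (mk u' v' h') → ∃ t, v.start = v'.start ∧ v.edges = v'.edges ++ t ∧
        u.start = u'.start ∧ u.edges = u'.edges ++ t := by
    intro u v u' v' h h' H
    have hv := congrFun H (v.start, v.edges)
    rw [act_mk_self, eq_comm, act_mk_eq_some_iff] at hv
    simpa only [Prod.mk.injEq, and_assoc] using hv
  rintro (_ | ⟨⟨u, v⟩, h⟩) (_ | ⟨⟨u', v'⟩, h'⟩) H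
  · rfl
  · cases (congrFun H (v'.start, v'.edges)).trans (act_mk_self h')
  · cases (congrFun H (v.start, v.edges)).symm.trans (act_mk_self h)
  obtain ⟨t, hvs, hve, hus, hue⟩ := key h h' H
  obtain ⟨t', -, hve', -, -⟩ := key h' h H.symm
  obtain rfl : t = [] := by
    rw [hve', List.append_assoc] at hve
    exact (List.append_eq_nil_iff.1 (List.append_right_eq_self.1 hve.symm)).2
  exact mk_inj.2 ⟨GPath.ext hus (by simpa using hue), GPath.ext hvs (by simpa using hve)⟩

theorem mul_assoc (a b c : GIS src rng) : a * b * c = a * (b * c) :=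
  act_injective <| funext fun x => by simp only [act_mul, Option.bind_assoc]

theorem finite_setOf_act_eq_some (x y : V × List E) :
    {g : GIS src rng | act g x = some y}.Finite := by
  have hfin : {e : GISElem src rng | act (some e) x = some y}.Finite := by
    refine Set.Finite.of_finite_image (f := fun e => e.1.2.edges.length)
      ((Set.finite_Iic x.2.length).subset ?_) ?_
    · rintro _ ⟨⟨⟨p, q⟩, h⟩, he, rfl⟩
      obtain ⟨t, rfl, -⟩ := (act_mk_eq_some_iff h).1 he
      simp
    · rintro ⟨⟨p, q⟩, h⟩ he ⟨⟨p', q'⟩, h'⟩ he' hlen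
      obtain ⟨t, rfl, rfl⟩ := (act_mk_eq_some_iff h).1 he
      obtain ⟨t', hx, hy⟩ := (act_mk_eq_some_iff h').1 he'
      simp only [Prod.mk.injEq] at hx hy
      obtain ⟨hq, rfl⟩ := List.append_inj hx.2 hlen
      exact Subtype.ext (Prod.ext (GPath.ext hy.1 (List.append_cancel_right hy.2))
        (GPath.ext hx.1 hq))
  refine (hfin.image some).subset ?_
  rintro (_ | e) hg
  · cases hg
  · exact ⟨e, hg, rfl⟩

theorem eq_zero_or_exists_eq_mk (g : GIS src rng) :
    g = 0 ∨ ∃ p q h, g = mk p q h := by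
  rcases g with _ | ⟨⟨p, q⟩, h⟩
  · exact .inl rfl
  · exact .inr ⟨p, q, h, rfl⟩

def idem (p : GPath src rng) : GIS src rng := mk p p rfl

def vertex (src rng : E → V) (w : V) : GIS src rng := idem (GPath.vertex src rng w)

/-- The path `q`, i.e. `q r(q)⁻¹`. -/
def path (q : GPath src rng) : GIS src rng :=
  mk q (GPath.vertex src rng q.range) (GPath.vertex_range q.range).symm

/-- The ghost path `q⁻¹`, i.e. `r(q) q⁻¹`. -/
def pathInv (q : GPath src rng) : GIS src rng :=
  mk (GPath.vertex src rng q.range) q (GPath.vertex_range q.range)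

theorem mk_mul_idem (p q : GPath src rng) (h : p.range = q.range) :
    mk p q h * idem q = mk p q h :=
  mk_mul_mk_self p q q h rfl

theorem idem_mul_mk (p q : GPath src rng) (h : p.range = q.range) :
    idem p * mk p q h = mk p q h :=
  mk_mul_mk_self p p q rfl h

theorem idem_mul_self (p : GPath src rng) : idem p * idem p = idem p :=
  mk_mul_mk_self p p p rfl rfl

theorem idem_ne_zero (p : GPath src rng) : idem p ≠ 0 := mk_ne_zero _ _ _

theorem idem_injective : Function.Injective (idem : GPath src rng → GIS src rng) :=
  fun _ _ h => (mk_inj.1 h).1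

theorem vertex_injective : Function.Injective (vertex src rng) :=
  fun _ _ h => congrArg GPath.start (idem_injective h)

theorem path_injective : Function.Injective (path : GPath src rng → GIS src rng) :=
  fun _ _ h => (mk_inj.1 h).1

theorem pathInv_injective : Function.Injective (pathInv : GPath src rng → GIS src rng) :=
  fun _ _ h => (mk_inj.1 h).2

theorem idem_mul_idem_of_isPrefix {p q : GPath src rng} (h : p.IsPrefix q) :
    idem p * idem q = idem q := by
  rw [idem, idem, mk_mul_mk_of_isPrefix rfl rfl h, mk_inj]
  obtain ⟨hs, t, ht⟩ := id h
  exact ⟨GPath.ext hs (by rw [glue_edges, ← ht, List.drop_left]), rfl⟩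

theorem idem_mul_idem_of_isPrefix' {p q : GPath src rng} (h : p.IsPrefix q) :
    idem q * idem p = idem q := by
  by_cases hqp : q.IsPrefix p
  · rw [h.antisymm hqp, idem_mul_self]
  rw [idem, idem, mk_mul_mk_of_isPrefix' rfl rfl hqp h, mk_inj]
  obtain ⟨hs, t, ht⟩ := id h
  exact ⟨rfl, GPath.ext hs (by rw [glue_edges, ← ht, List.drop_left])⟩

theorem idem_mul_idem_eq_zero {p q : GPath src rng} (hpq : ¬p.IsPrefix q) (hqp : ¬q.IsPrefix p) :
    idem p * idem q = 0 :=
  mk_mul_mk_eq_zero rfl rfl hpq hqp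

theorem vertex_mul_idem {p : GPath src rng} {w : V} (hp : p.start = w) :
    vertex src rng w * idem p = idem p :=
  idem_mul_idem_of_isPrefix ⟨hp.symm, List.nil_prefix⟩

theorem vertex_mul_idem_of_ne {p : GPath src rng} {w : V} (hp : p.start ≠ w) :
    vertex src rng w * idem p = 0 :=
  idem_mul_idem_eq_zero (fun h => hp h.1.symm) (fun h => hp h.1)

theorem vertex_mul_vertex_of_ne {w w' : V} (h : w ≠ w') :
    vertex src rng w * vertex src rng w' = 0 :=
  vertex_mul_idem_of_ne (Ne.symm h)

theorem vertex_mul_pathInv (q : GPath src rng) : vertex src rng q.range * pathInv q = pathInv q :=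
  idem_mul_mk _ _ _

theorem path_mul_vertex (q : GPath src rng) : path q * vertex src rng q.range = path q :=
  mk_mul_idem _ _ _

theorem path_mul_pathInv (q : GPath src rng) : path q * pathInv q = idem q :=
  mk_mul_mk_self q (GPath.vertex src rng q.range) q rfl rfl

theorem act_of_pathInv_mul_mul_path {u v : GPath src rng} (huv : u.range = v.range)
    {g : GIS src rng} (hg : pathInv u * g * path v = vertex src rng u.range) :
    act g (v.start, v.edges) = some (u.start, u.edges) := by
  have hact := congrArg (act · (u.range, [])) hg
  have hv : act (path v) (u.range, []) = some (v.start, v.edges) :=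
    (act_mk_eq_some_iff _).2 ⟨[], by simp [huv], by simp⟩
  have hw : act (vertex src rng u.range) (u.range, []) = some (u.range, []) :=
    (act_mk_eq_some_iff _).2 ⟨[], rfl, rfl⟩
  simp only [act_mul, hv, hw, Option.bind_some, Option.bind_eq_some_iff] at hact
  obtain ⟨z, hz, hz'⟩ := hact
  obtain ⟨t, rfl, ht⟩ := (act_mk_eq_some_iff _).1 hz'
  simp only [GPath.vertex_edges, List.nil_append, Prod.mk.injEq, List.nil_eq] at ht
  rw [hz, ht.2, List.append_nil]

theorem pathInv_mul_mk_mul_path {u v : GPath src rng} (huv : u.range = v.range) :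
    pathInv u * mk u v huv * path v = vertex src rng u.range := by
  rw [pathInv, mk_mul_mk_self, path, mk_mul_mk_self, vertex, idem, mk_inj]
  exact ⟨rfl, by rw [huv]⟩

theorem eq_idem_of_mul_self_ne_zero (hE : IsAcyclic src rng) {g : GIS src rng} (hg : g * g ≠ 0) :
    ∃ p, g = idem p := by
  obtain rfl | ⟨p, q, h, rfl⟩ := eq_zero_or_exists_eq_mk g
  · exact absurd (zero_mul 0) hg
  refine ⟨p, mk_inj.2 ⟨rfl, ?_⟩⟩
  by_cases hqp : q.IsPrefix p
  · exact (eq_of_isPrefix_of_range_eq hE hqp h.symm)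
  by_cases hpq : p.IsPrefix q
  · exact (eq_of_isPrefix_of_range_eq hE hpq h).symm
  · exact absurd (mk_mul_mk_eq_zero h h hqp hpq) hg

theorem idem_mul_idem_of_range_eq (hE : IsAcyclic src rng) {p q : GPath src rng}
    (hr : p.range = q.range) (hpq : p ≠ q) : idem p * idem q = 0 :=
  idem_mul_idem_eq_zero (fun h => hpq (eq_of_isPrefix_of_range_eq hE h hr))
    (fun h => hpq (eq_of_isPrefix_of_range_eq hE h hr.symm).symm)

end GIS

end GISPaper

open Filter Topology Set Function

section

variable {S : Type*} [TopologicalSpace S]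

theorem Dense.infinite_inter_of_not_isOpen_singleton [T1Space S] {D : Set S} (hD : Dense D)
    {a : S} (ha : ¬IsOpen ({a} : Set S)) : ∀ U ∈ 𝓝 a, (U ∩ D).Infinite := by
  intro U hU hfin
  set W := interior U \ ((U ∩ D) \ {a})
  have hW : IsOpen W := isOpen_interior.sdiff (hfin.subset sdiff_subset).isClosed
  have haW : a ∈ W := ⟨mem_interior_iff_mem_nhds.2 hU, fun h => h.2 rfl⟩
  refine ha (isOpen_singleton_of_finite_mem_nhds a (hW.mem_nhds haW)
    ((finite_singleton a).subset ?_))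
  calc W ⊆ closure (W ∩ D) := hD.open_subset_closure_inter hW
    _ ⊆ closure {a} := closure_mono fun x ⟨⟨hxU, hxF⟩, hxD⟩ =>
        by_contra fun hxa => hxF ⟨⟨interior_subset hxU, hxD⟩, hxa⟩
    _ = {a} := closure_singleton

theorem exists_mem_nhds_forall_mem_of_continuous₂ {f : S → S → S} (hf : Continuous (uncurry f))
    {x y : S} {W : Set S} (hW : W ∈ 𝓝 (f x y)) :
    ∃ U ∈ 𝓝 x, ∃ U' ∈ 𝓝 y, ∀ a ∈ U, ∀ b ∈ U', f a b ∈ W := by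
  have h : uncurry f ⁻¹' W ∈ 𝓝 (x, y) := hf.continuousAt hW
  rw [nhds_prod_eq, mem_prod_iff] at h
  obtain ⟨U, hU, U', hU', hUU'⟩ := h
  exact ⟨U, hU, U', hU', fun a ha b hb => hUU' (mk_mem_prod ha hb)⟩

theorem tendsto_cofinite_of_forall_infinite {α X : Type*} {f : α → X} {l : Filter X}
    (h : ∀ A : Set α, A.Infinite →
      ∃ u : ℕ → α, Injective u ∧ range u ⊆ A ∧ Tendsto (f ∘ u) cofinite l) :
    Tendsto f cofinite l := by
  intro W hW
  rw [mem_map, mem_cofinite]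
  by_contra hA
  obtain ⟨u, hu, huA, hfu⟩ := h _ hA
  obtain ⟨n, hn⟩ := (hfu.eventually_mem hW).exists
  exact huA ⟨n, rfl⟩ hn

theorem Set.Infinite.exists_seq_const_or_injective {α β : Type*} {A : Set α} (hA : A.Infinite)
    (f : α → β) : ∃ u : ℕ → α, Injective u ∧ range u ⊆ A ∧
      ((∃ c, ∀ n, f (u n) = c) ∨ Injective (f ∘ u)) := by
  have seq : ∀ B ⊆ A, B.Infinite → ∃ u : ℕ → α, Injective u ∧ range u ⊆ A ∧ ∀ n, u n ∈ B :=
    fun B hBA hB => ⟨fun n => hB.natEmbedding B n, fun m n h => hB.natEmbedding B |>.injective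
      (Subtype.ext h), by rintro _ ⟨n, rfl⟩; exact hBA (hB.natEmbedding B n).2,
      fun n => (hB.natEmbedding B n).2⟩
  by_cases him : (f '' A).Finite
  · obtain ⟨c, hc⟩ : ∃ c, (A ∩ f ⁻¹' {c}).Infinite := by
      by_contra! hall
      exact hA ((him.biUnion fun c _ => hall c).subset fun a ha =>
        mem_biUnion (mem_image_of_mem f ha) ⟨ha, rfl⟩)
    obtain ⟨u, hu, huA, huc⟩ := seq _ inter_subset_left hc
    exact ⟨u, hu, huA, .inl ⟨c, fun n => (huc n).2⟩⟩
  · obtain ⟨B, hBA, hB⟩ := exists_subset_bijOn A f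
    have hBinf : B.Infinite := fun h => him (hB.image_eq ▸ h.image f)
    obtain ⟨u, hu, huA, huB⟩ := seq B hBA hBinf
    exact ⟨u, hu, huA, .inr fun m n h => hu (hB.injOn (huB m) (huB n) h)⟩

end

namespace GISPaper

section

variable {S : Type*} [TopologicalSpace S]

theorem CLPCompact.exists_forall_infinite_inter [T1Space S] (hS : CLPCompact S) {Z : Set S}
    (hZ : Z.Infinite) (hiso : ∀ z ∈ Z, IsOpen ({z} : Set S)) :
    ∃ t, ∀ U ∈ 𝓝 t, (U ∩ Z).Infinite := by
  -- otherwise `Z` is clopen, and `Zᶜ` with the points of `Z` is a clopen cover of `S` that has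
  -- no finite subcover
  by_contra! hfin
  have hZopen : IsOpen Z := by
    rw [← biUnion_of_singleton Z]
    exact isOpen_biUnion hiso
  have hZclosed : IsClosed Z := by
    refine isOpen_compl_iff.1 (isOpen_iff_mem_nhds.2 fun x hx => ?_)
    obtain ⟨U, hU, hUZ⟩ := hfin x
    filter_upwards [hU, hUZ.isClosed.isOpen_compl.mem_nhds fun h => hx h.2] with y hyU hy hyZ
    exact hy ⟨hyU, hyZ⟩
  obtain ⟨ℱ, hℱ, hℱfin, hcover⟩ := hS (insert Zᶜ ((fun z => {z}) '' Z))
    (by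
      rintro _ (rfl | ⟨z, hz, rfl⟩)
      · exact ⟨hZopen.isClosed_compl, hZclosed.isOpen_compl⟩
      · exact ⟨isClosed_singleton, hiso z hz⟩)
    (eq_univ_of_forall fun x => by
      by_cases hx : x ∈ Z
      · exact ⟨{x}, mem_insert_of_mem _ ⟨x, hx, rfl⟩, rfl⟩
      · exact ⟨Zᶜ, mem_insert _ _, hx⟩)
  refine hZ ((hℱfin.biUnion (t := (· ∩ Z)) fun F hF => ?_).subset fun z hz => ?_)
  · show (F ∩ Z).Finite
    rcases hℱ hF with rfl | ⟨z, -, rfl⟩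
    · simp
    · exact (finite_singleton z).subset inter_subset_left
  · obtain ⟨F, hF, hzF⟩ := (hcover ▸ mem_univ z : z ∈ ⋃₀ ℱ)
    exact mem_biUnion hF ⟨hzF, hz⟩

theorem CLPCompact.exists_forall_infinite_of_not_tendsto [T1Space S] (hS : CLPCompact S)
    {α : Type*} {s : α → S} (hs : Injective s) (hiso : ∀ a, IsOpen ({s a} : Set S)) {z : S}
    (h : ¬Tendsto s cofinite (𝓝 z)) :
    ∃ W ∈ 𝓝 z, ∃ t, ∀ U ∈ 𝓝 t, {a | s a ∈ U ∧ s a ∉ W}.Infinite := by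
  obtain ⟨W, hW, hA⟩ : ∃ W ∈ 𝓝 z, {a | s a ∉ W}.Infinite := by
    by_contra! hall
    exact h fun W hW => mem_cofinite.2 (hall W hW)
  obtain ⟨t, ht⟩ := hS.exists_forall_infinite_inter (hA.image hs.injOn) (by
    rintro _ ⟨a, -, rfl⟩
    exact hiso a)
  refine ⟨W, hW, t, fun U hU => Set.Infinite.of_image s ?_⟩
  refine (ht U hU).mono ?_
  rintro _ ⟨hU, a, ha, rfl⟩
  exact ⟨a, ⟨hU, ha⟩, rfl⟩

theorem tendsto_cofinite_of_map₂_eq_self [T1Space S] (hS : CLPCompact S) {f : S → S → S}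
    (hf : Continuous (uncurry f)) {z : S} (hz : ∀ t, f t z = z) {α : Type*} {s b : α → S}
    (hs : Injective s) (hiso : ∀ a, IsOpen ({s a} : Set S)) (hb : Tendsto b cofinite (𝓝 z))
    (hsb : ∀ a, f (s a) (b a) = s a) : Tendsto s cofinite (𝓝 z) := by
  by_contra hnot
  obtain ⟨W, hW, t, ht⟩ := hS.exists_forall_infinite_of_not_tendsto hs hiso hnot
  obtain ⟨U, hU, U', hU', hUU'⟩ :=
    exists_mem_nhds_forall_mem_of_continuous₂ hf ((hz t).symm ▸ hW : W ∈ 𝓝 (f t z))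
  obtain ⟨a, ⟨haU, haW⟩, hab⟩ := ((ht U hU).sdiff (mem_cofinite.1 (hb hU'))).nonempty
  exact haW (hsb a ▸ hUU' _ haU _ (not_not.1 hab))

variable [T1Space S] [Mul S] [ContinuousMul S]

theorem tendsto_cofinite_of_pairwise_mul_eq (hS : CLPCompact S) {α : Type*} {s : α → S}
    (hs : Injective s) (hiso : ∀ a, IsOpen ({s a} : Set S)) (hidem : ∀ a, s a * s a = s a) {z : S}
    (horth : Pairwise fun a b => s a * s b = z) : Tendsto s cofinite (𝓝 z) := by
  by_contra hnot
  obtain ⟨W, hW, t, ht⟩ := hS.exists_forall_infinite_of_not_tendsto hs hiso hnot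
  have htt : t * t = z := by
    by_contra hne
    obtain ⟨U, hU, U', hU', hUU'⟩ := exists_mem_nhds_forall_mem_of_continuous₂ continuous_mul
      (isOpen_compl_singleton.mem_nhds hne)
    obtain ⟨a, ha, b, hb, hab⟩ := (ht _ (inter_mem hU hU')).nontrivial
    exact hUU' _ ha.1.1 _ hb.1.2 (horth hab)
  obtain ⟨U, hU, U', hU', hUU'⟩ := exists_mem_nhds_forall_mem_of_continuous₂ continuous_mul
    (htt ▸ hW : W ∈ 𝓝 (t * t))
  obtain ⟨a, ha, haW⟩ := (ht _ (inter_mem hU hU')).nonempty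
  exact haW (hidem a ▸ hUU' _ ha.1 _ ha.2)

end

section

open GIS

variable {V E : Type*} {src rng : E → V}
variable {S : Type*} [TopologicalSpace S] [T2Space S] [Mul S] [ContinuousMul S]
variable (ι : GIS src rng →ₙ* S)

theorem mul_map_zero (hd : DenseRange ι) (t : S) : t * ι 0 = ι 0 := by
  refine congrFun (Continuous.ext_on hd (f := (· * ι 0)) (g := fun _ => ι 0)
    (continuous_id.mul continuous_const) continuous_const ?_) t
  rintro _ ⟨g, rfl⟩
  exact (map_mul ι g 0).symm.trans (congrArg ι (GIS.mul_zero g))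

theorem map_zero_mul (hd : DenseRange ι) (t : S) : ι 0 * t = ι 0 := by
  refine congrFun (Continuous.ext_on hd (f := (ι 0 * ·)) (g := fun _ => ι 0)
    (continuous_const.mul continuous_id) continuous_const ?_) t
  rintro _ ⟨g, rfl⟩
  exact (map_mul ι 0 g).symm.trans (congrArg ι (GIS.zero_mul g))

theorem isOpen_singleton_map_vertex (hι : Injective ι) (hd : DenseRange ι) (hE : IsAcyclic src rng)
    (w : V) : IsOpen ({ι (vertex src rng w)} : Set S) := by
  -- Near `w` all products are nonzero, so by acyclicity every element there is an idempotent
  -- `q q⁻¹`. Pick such a `p p⁻¹ ≠ w`: right multiplication by `p p⁻¹` moves `w` close to `p p⁻¹`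
  -- but fixes `q q⁻¹` whenever `p` is a prefix of `q`, so near `w` only the finitely many
  -- prefixes `q` of `p` remain.
  by_contra hiso
  have hee : ι (vertex src rng w) * ι (vertex src rng w) ≠ ι 0 := by
    rw [← map_mul, vertex, idem_mul_self]
    exact hι.ne (idem_ne_zero _)
  obtain ⟨U, hU, U', hU', hUU'⟩ := exists_mem_nhds_forall_mem_of_continuous₂ continuous_mul
    (isOpen_compl_singleton.mem_nhds hee)
  have hprod : ∀ g g', ι g ∈ U ∩ U' → ι g' ∈ U ∩ U' → g * g' ≠ 0 := fun g g' hg hg' h0 =>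
    hUU' _ hg.1 _ hg'.2 (by rw [← map_mul, h0]; rfl)
  have hidem : ∀ g, ι g ∈ U ∩ U' → ∃ p, g = idem p := fun g hg =>
    eq_idem_of_mul_self_ne_zero hE (hprod g g hg hg)
  have heU : ι (vertex src rng w) ∈ U ∩ U' := ⟨mem_of_mem_nhds hU, mem_of_mem_nhds hU'⟩
  have hinf := Dense.infinite_inter_of_not_isOpen_singleton hd hiso
  obtain ⟨_, ⟨hpU, g, rfl⟩, hpe⟩ :=
    ((hinf _ (inter_mem hU hU')).sdiff (finite_singleton (ι (vertex src rng w)))).nonempty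
  obtain ⟨p, rfl⟩ := hidem g hpU
  have hep : vertex src rng w * idem p = idem p := by
    by_cases hps : p.start = w
    · exact vertex_mul_idem hps
    · exact absurd (vertex_mul_idem_of_ne hps) (hprod _ _ heU hpU)
  obtain ⟨W, W', hW, hW', heW, hpW', hWW'⟩ := t2_separation (Ne.symm hpe)
  have hN : U ∩ U' ∩ W ∩ (· * ι (idem p)) ⁻¹' W' ∈ 𝓝 (ι (vertex src rng w)) := by
    refine inter_mem (inter_mem (inter_mem hU hU') (hW.mem_nhds heW)) ?_
    refine (continuous_mul_const _).continuousAt.preimage_mem_nhds (hW'.mem_nhds ?_)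
    rwa [← map_mul, hep]
  refine hinf _ hN (((GPath.finite_setOf_isPrefix p).image idem).image ι |>.subset ?_)
  rintro _ ⟨⟨⟨hqU, hqW⟩, hqW'⟩, g, rfl⟩
  obtain ⟨q, rfl⟩ := hidem g hqU
  refine ⟨idem q, ⟨q, by_contra fun hqp => ?_, rfl⟩, rfl⟩
  by_cases hpq : p.IsPrefix q
  · rw [mem_preimage, ← map_mul, idem_mul_idem_of_isPrefix' hpq] at hqW'
    exact hWW'.notMem_of_mem_left hqW hqW'
  · exact hprod _ _ hqU hpU (idem_mul_idem_eq_zero hqp hpq)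

theorem isOpen_singleton_map_of_ne_zero (hι : Injective ι) (hd : DenseRange ι)
    (hE : IsAcyclic src rng) {g : GIS src rng} (hg : g ≠ 0) : IsOpen ({ι g} : Set S) := by
  obtain ⟨u, v, huv, rfl⟩ := (eq_zero_or_exists_eq_mk g).resolve_left hg
  by_contra hiso
  -- `s ↦ u⁻¹ s v` maps only finitely many elements of `G(E)` to the isolated point `r(u)`
  set φ : S → S := fun s => ι (pathInv u) * s * ι (path v)
  have hφ : Continuous φ := (continuous_const.mul continuous_id).mul continuous_const
  have hN : φ ⁻¹' {ι (vertex src rng u.range)} ∈ 𝓝 (ι (mk u v huv)) := by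
    refine ((isOpen_singleton_map_vertex ι hι hd hE u.range).preimage hφ).mem_nhds ?_
    simp only [φ, mem_preimage, mem_singleton_iff, ← map_mul, pathInv_mul_mk_mul_path]
  refine Dense.infinite_inter_of_not_isOpen_singleton hd hiso _ hN
    ((finite_setOf_act_eq_some (v.start, v.edges) (u.start, u.edges)).image ι |>.subset ?_)
  rintro _ ⟨hg, g, rfl⟩
  refine ⟨g, act_of_pathInv_mul_mul_path huv (hι ?_), rfl⟩
  simpa only [φ, mem_preimage, mem_singleton_iff, ← map_mul] using hg

theorem tendsto_map_idem_cofinite (hS : CLPCompact S) (hι : Injective ι) (hd : DenseRange ι)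
    (hE : IsAcyclic src rng) : Tendsto (fun p => ι (idem p)) cofinite (𝓝 (ι 0)) := by
  have hiso {g : GIS src rng} : g ≠ 0 → IsOpen ({ι g} : Set S) :=
    isOpen_singleton_map_of_ne_zero ι hι hd hE
  refine tendsto_cofinite_of_forall_infinite fun A hA => ?_
  obtain ⟨u, hu, huA, ⟨w, hw⟩ | hr⟩ := hA.exists_seq_const_or_injective GPath.range
  · refine ⟨u, hu, huA, tendsto_cofinite_of_pairwise_mul_eq hS (hι.comp (idem_injective.comp hu))
      (fun n => hiso (idem_ne_zero _)) (fun n => ?_) fun m n hmn => ?_⟩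
    · simp only [comp, ← map_mul, idem_mul_self]
    · simp only [comp, ← map_mul]
      rw [idem_mul_idem_of_range_eq hE ((hw m).trans (hw n).symm) (hu.ne hmn)]
  -- distinct ranges: `r(p) → 0`, hence `p⁻¹ → 0` and `p → 0`, hence `p p⁻¹ = p · p⁻¹ → 0 · 0`
  refine ⟨u, hu, huA, show Tendsto (fun n => ι (idem (u n))) cofinite (𝓝 (ι 0)) from ?_⟩
  have hvertex : Tendsto (fun n => ι (vertex src rng (u n).range)) cofinite (𝓝 (ι 0)) :=
    tendsto_cofinite_of_pairwise_mul_eq hS (s := fun n => ι (vertex src rng (u n).range))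
      (hι.comp (vertex_injective.comp hr))
      (fun n => hiso (idem_ne_zero _)) (fun n => by rw [← map_mul, vertex, idem_mul_self])
      fun m n hmn => (map_mul ι _ _).symm.trans (congrArg ι (vertex_mul_vertex_of_ne (hr.ne hmn)))
  have hpathInv : Tendsto (fun n => ι (pathInv (u n))) cofinite (𝓝 (ι 0)) :=
    tendsto_cofinite_of_map₂_eq_self hS (f := fun x y => y * x) (continuous_snd.mul continuous_fst)
      (map_zero_mul ι hd) (hι.comp (pathInv_injective.comp hu)) (fun n => hiso (mk_ne_zero _ _ _))
      hvertex fun n => by rw [← map_mul, vertex_mul_pathInv]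
  have hpath : Tendsto (fun n => ι (path (u n))) cofinite (𝓝 (ι 0)) :=
    tendsto_cofinite_of_map₂_eq_self hS (f := (· * ·)) continuous_mul (mul_map_zero ι hd)
      (hι.comp (path_injective.comp hu)) (fun n => hiso (mk_ne_zero _ _ _)) hvertex
      fun n => by rw [← map_mul, path_mul_vertex]
  simpa only [← map_mul, path_mul_pathInv, GIS.zero_mul] using hpath.mul hpathInv

theorem tendsto_cofinite_nhds_map_zero (hS : CLPCompact S) (hι : Injective ι) (hd : DenseRange ι)
    (hE : IsAcyclic src rng) : Tendsto ι cofinite (𝓝 (ι 0)) := by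
  refine tendsto_cofinite_of_forall_infinite fun A hA => ?_
  have hA' : {e : GISElem src rng | (some e : GIS src rng) ∈ A}.Infinite := fun hfin =>
    hA (((hfin.image some).insert (0 : GIS src rng)).subset fun g hg => by
      rcases g with _ | e
      exacts [mem_insert _ _, mem_insert_of_mem _ ⟨e, hg, rfl⟩])
  obtain ⟨u, hu, huA, hcases⟩ := hA'.exists_seq_const_or_injective (·.1.2)
  refine ⟨some ∘ u, (Option.some_injective _).comp hu, ?_, ?_⟩
  · rintro _ ⟨n, rfl⟩
    exact huA ⟨n, rfl⟩
  have hsu : Injective fun n => ι (some (u n)) := hι.comp ((Option.some_injective _).comp hu)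
  have hiso (n : ℕ) : IsOpen ({ι (some (u n))} : Set S) :=
    isOpen_singleton_map_of_ne_zero ι hι hd hE (Option.some_ne_none _)
  -- write `u n = p_n q_n⁻¹`: if all `q_n` agree, the `p_n` are distinct and `p_n p_n⁻¹` fixes
  -- `u n` on the left; otherwise the `q_n` are distinct and `q_n q_n⁻¹` fixes `u n` on the right
  rcases hcases with ⟨q, hq⟩ | hr
  · have hp : Injective fun n => (u n).1.1 := fun m n h =>
      hu (Subtype.ext (Prod.ext h ((hq m).trans (hq n).symm)))
    exact tendsto_cofinite_of_map₂_eq_self hS (f := fun x y => y * x)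
      (continuous_snd.mul continuous_fst) (map_zero_mul ι hd) hsu hiso
      ((tendsto_map_idem_cofinite ι hS hι hd hE).comp hp.tendsto_cofinite)
      fun n => (map_mul ι _ _).symm.trans (congrArg ι (idem_mul_mk _ _ (u n).2))
  · exact tendsto_cofinite_of_map₂_eq_self hS (f := (· * ·)) continuous_mul (mul_map_zero ι hd)
      hsu hiso ((tendsto_map_idem_cofinite ι hS hι hd hE).comp hr.tendsto_cofinite)
      fun n => (map_mul ι _ _).symm.trans (congrArg ι (mk_mul_idem _ _ (u n).2))

theorem surjective_of_denseRange (hS : CLPCompact S) (hι : Injective ι) (hd : DenseRange ι)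
    (hE : IsAcyclic src rng) : Surjective ι := by
  intro s
  by_contra! hs
  have hiso : ¬IsOpen ({s} : Set S) := fun ho =>
    (hd.exists_mem_open ho ⟨s, rfl⟩).elim fun g hg => hs g hg
  obtain ⟨P, Q, hP, hQ, hsP, h0Q, hPQ⟩ := t2_separation (hs 0).symm
  have hfin := mem_cofinite.1 (tendsto_cofinite_nhds_map_zero ι hS hι hd hE (hQ.mem_nhds h0Q))
  refine Dense.infinite_inter_of_not_isOpen_singleton hd hiso P (hP.mem_nhds hsP)
    ((hfin.image ι).subset ?_)
  rintro _ ⟨hgP, g, rfl⟩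
  exact ⟨g, hPQ.notMem_of_mem_left hgP, rfl⟩

theorem induced_eq_tauC (hS : CLPCompact S) (hι : Injective ι) (hd : DenseRange ι)
    (hE : IsAcyclic src rng) : TopologicalSpace.induced ι ‹_› = tauC (GIS src rng) := by
  refine TopologicalSpace.ext_iff.2 fun U => ?_
  rw [isOpen_induced_iff]
  show _ ↔ ((0 : GIS src rng) ∈ U → Uᶜ.Finite)
  constructor
  · rintro ⟨O, hO, rfl⟩ h0
    exact mem_cofinite.1 (tendsto_cofinite_nhds_map_zero ι hS hι hd hE (hO.mem_nhds h0))
  intro hU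
  by_cases h0 : (0 : GIS src rng) ∈ U
  · refine ⟨(ι '' Uᶜ)ᶜ, ((hU h0).image ι).isClosed.isOpen_compl, ?_⟩
    rw [preimage_compl, hι.preimage_image, compl_compl]
  · refine ⟨ι '' U, ?_, hι.preimage_image U⟩
    rw [image_eq_iUnion]
    exact isOpen_biUnion fun g hg =>
      isOpen_singleton_map_of_ne_zero ι hι hd hE (ne_of_mem_of_not_mem hg h0)

theorem compactSpace_of_denseRange (hS : CLPCompact S) (hι : Injective ι) (hd : DenseRange ι)
    (hE : IsAcyclic src rng) : CompactSpace S :=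
  ⟨by simpa [(surjective_of_denseRange ι hS hι hd hE).range_eq] using
    (tendsto_cofinite_nhds_map_zero ι hS hι hd hE).isCompact_insert_range_of_cofinite⟩

end

theorem clpCompact_of_compactSpace (X : Type*) [TopologicalSpace X] [CompactSpace X] :
    CLPCompact X := by
  intro 𝒰 h𝒰 hcover
  obtain ⟨ℱ, hℱ, hfin, hsub⟩ := isCompact_univ.elim_finite_subcover_image (c := id)
    (fun U hU => (h𝒰 U hU).isOpen) (by simp [← sUnion_eq_biUnion, hcover])
  exact ⟨ℱ, hℱ, hfin, univ_subset_iff.1 (by simpa [← sUnion_eq_biUnion] using hsub)⟩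

section tauC

variable (α : Type*) [Zero α]

theorem tauC_t2Space : @T2Space α (tauC α) := by
  let := tauC α
  have hiso (x : α) (hx : x ≠ 0) : IsOpen ({x} : Set α) := fun h0 => absurd h0.symm hx
  have hco (x : α) : IsOpen ({x}ᶜ : Set α) := fun _ => by simp
  refine ⟨fun x y hxy => ?_⟩
  rcases eq_or_ne x 0 with rfl | hx
  · exact ⟨{y}ᶜ, {y}, hco y, hiso y hxy.symm, hxy, rfl, disjoint_compl_left⟩
  · exact ⟨{x}, {x}ᶜ, hiso x hx, hco x, rfl, hxy.symm, disjoint_compl_right⟩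

theorem tauC_compactSpace : @CompactSpace α (tauC α) := by
  let := tauC α
  have h : Tendsto id cofinite (𝓝 (0 : α)) := fun U hU => by
    obtain ⟨O, hOU, hO, h0⟩ := mem_nhds_iff.1 hU
    exact mem_cofinite.2 ((hO h0).subset (compl_subset_compl.2 hOU))
  exact ⟨by simpa using h.isCompact_insert_range_of_cofinite⟩

end tauC

end GISPaper

open GISPaper in
/-- Let `E` be an acyclic graph. Then `G(E)` embeds densely into some
Hausdorff CLP-compact topological semigroup iff the multiplication of `G(E)` is
jointly continuous w.r.t. `τ_c`; moreover, every Hausdorff CLP-compact topological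
semigroup containing `G(E)` densely equals `G(E)` with the topology `τ_c` (the dense
embedding is onto and induces `τ_c`) and is compact. -/
theorem statement9 {V E : Type u} (src rng : E → V)
    (hacyc : ∀ p : GPath src rng, p.edges ≠ [] → p.start ≠ p.range) :
    ((∃ (S : Type u) (tS : TopologicalSpace S) (mulS : S → S → S),
        (∀ a b c : S, mulS (mulS a b) c = mulS a (mulS b c)) ∧
        @T2Space S tS ∧
        @Continuous _ _ (@instTopologicalSpaceProd S S tS tS) tS
          (fun p : S × S => mulS p.1 p.2) ∧
        @CLPCompact S tS ∧
        ∃ ι : GIS src rng → S, Function.Injective ι ∧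
          (∀ x y : GIS src rng, ι (x * y) = mulS (ι x) (ι y)) ∧
          @DenseRange S tS _ ι) ↔
      @Continuous _ _
        (@instTopologicalSpaceProd _ _ (tauC (GIS src rng)) (tauC (GIS src rng)))
        (tauC (GIS src rng)) (fun p : GIS src rng × GIS src rng => p.1 * p.2)) ∧
    (∀ (S : Type u) (tS : TopologicalSpace S) (mulS : S → S → S),
      (∀ a b c : S, mulS (mulS a b) c = mulS a (mulS b c)) →
      @T2Space S tS →
      @Continuous _ _ (@instTopologicalSpaceProd S S tS tS) tS
        (fun p : S × S => mulS p.1 p.2) →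
      @CLPCompact S tS →
      ∀ ι : GIS src rng → S, Function.Injective ι →
        (∀ x y : GIS src rng, ι (x * y) = mulS (ι x) (ι y)) →
        @DenseRange S tS _ ι →
        Function.Surjective ι ∧
        TopologicalSpace.induced ι tS = tauC (GIS src rng) ∧
        @CompactSpace S tS) := by
  refine ⟨⟨?_, fun hcont => ?_⟩, ?_⟩
  · rintro ⟨S, tS, mulS, -, hT2, hcont, hS, ι, hι, hmul, hd⟩
    let : Mul S := ⟨mulS⟩
    have : ContinuousMul S := ⟨hcont⟩
    let ι' : GIS src rng →ₙ* S := ⟨ι, hmul⟩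
    have h := continuousMul_induced ι'
    rw [induced_eq_tauC ι' hS hι hd hacyc] at h
    exact h.continuous_mul
  · let := tauC (GIS src rng)
    have := tauC_compactSpace (GIS src rng)
    exact ⟨GIS src rng, _, (· * ·), GIS.mul_assoc, tauC_t2Space _, hcont,
      clpCompact_of_compactSpace _, id, injective_id, fun _ _ => rfl, denseRange_id⟩
  · intro S tS mulS _ hT2 hcont hS ι hι hmul hd
    let : Mul S := ⟨mulS⟩
    have : ContinuousMul S := ⟨hcont⟩
    let ι' : GIS src rng →ₙ* S := ⟨ι, hmul⟩
    exact ⟨surjective_of_denseRange ι' hS hι hd hacyc, induced_eq_tauC ι' hS hι hd hacyc,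
      compactSpace_of_denseRange ι' hS hι hd hacyc⟩
end

section
/- Let E be an acyclic directed graph and let G(E) be a dense subsemigroup of a Hausdorff topological semigroup S. Then the set E(S) of idempotents of S equals the closure in S of the set E(G(E)) of idempotents of G(E), and the set E(S) \ {0} is open in S (where 0 is the zero element of G(E)). -/
namespace GISPaper

theorem GPath.ext' {V E : Type*} {src rng : E → V} {p q : GPath src rng}
    (h1 : p.start = q.start) (h2 : p.edges = q.edges) : p = q := by
  cases p; cases q; cases h1; cases h2; rfl

theorem sq_eq {V E : Type*} {src rng : E → V}
    (hacyc : ∀ p : GPath src rng, p.edges ≠ [] → p.start ≠ p.range)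
    (x : GIS src rng) : x * x = x ∨ x * x = 0 := by
  have key : ∀ (a b : GPath src rng), a.range = b.range → b.start = a.start →
      b.edges <+: a.edges → b.edges = a.edges := by
    rintro a b hr hs ⟨t, ht⟩
    rcases eq_or_ne t [] with h0 | h0
    · simpa [h0] using ht
    · exfalso
      have hp := a.isPath
      rw [← ht, isPathFrom_append] at hp
      refine hacyc ⟨pathEnd rng a.start b.edges, t, hp.2⟩ h0 ?_
      show pathEnd rng a.start b.edges = pathEnd rng (pathEnd rng a.start b.edges) t
      calc pathEnd rng a.start b.edges = pathEnd rng b.start b.edges := by rw [hs]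
        _ = b.range := rfl
        _ = a.range := hr.symm
        _ = pathEnd rng a.start (b.edges ++ t) := by rw [ht]; rfl
        _ = pathEnd rng (pathEnd rng a.start b.edges) t := pathEnd_append rng a.start b.edges t
  obtain (_ | ⟨⟨⟨u, v⟩, h⟩⟩) := x
  · exact Or.inr rfl
  · show GIS.mul _ _ = _ ∨ GIS.mul _ _ = _
    simp only [GIS.mul]
    split_ifs with h1 h2
    · have he : v.edges = u.edges := key u v h h1.1 h1.2
      refine Or.inl (congrArg some (Subtype.ext (Prod.ext ?_ rfl)))
      exact GPath.ext' rfl (by simp [he])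
    · have he : u.edges = v.edges := key v u h.symm h2.1 h2.2
      refine Or.inl (congrArg some (Subtype.ext (Prod.ext rfl ?_)))
      exact GPath.ext' rfl (by simp [he])
    · exact Or.inr rfl

theorem sq_idem {V E : Type*} {src rng : E → V}
    (hacyc : ∀ p : GPath src rng, p.edges ≠ [] → p.start ≠ p.range)
    (x : GIS src rng) : (x * x) * (x * x) = x * x := by
  rcases sq_eq hacyc x with h | h
  · rw [h, h]
  · rw [h]; rfl

end GISPaper

open GISPaper in
/-- Let `E` be an acyclic graph and `G(E)` a dense subsemigroup of a
Hausdorff topological semigroup `S`. Then `E(S)` is the closure of `E(G(E))` in `S`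
and `E(S) \ {0}` is open in `S`. -/
theorem statement11 {V E : Type*} (src rng : E → V)
    (hacyc : ∀ p : GPath src rng, p.edges ≠ [] → p.start ≠ p.range)
    {S : Type*} [TopologicalSpace S] [T2Space S] [Mul S]
    (hassoc : ∀ a b c : S, a * b * c = a * (b * c))
    (hSmul : Continuous (fun p : S × S => p.1 * p.2))
    (ι : GIS src rng → S) (hinj : Function.Injective ι)
    (hhom : ∀ x y : GIS src rng, ι (x * y) = ι x * ι y)
    (hdense : DenseRange ι) :
    {s : S | s * s = s} = closure (ι '' {x : GIS src rng | x * x = x}) ∧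
    IsOpen ({s : S | s * s = s} \ {ι 0}) := by
  have hmulc : Continuous (fun s : S => s * s) :=
    hSmul.comp (continuous_id.prodMk continuous_id)
  have hIcl : IsClosed {s : S | s * s = s} := isClosed_eq hmulc continuous_id
  have hsub : ι '' {x : GIS src rng | x * x = x} ⊆ {s : S | s * s = s} := by
    rintro _ ⟨x, hx, rfl⟩
    show ι x * ι x = ι x
    rw [← hhom, hx]
  have hE : {s : S | s * s = s} = closure (ι '' {x : GIS src rng | x * x = x}) := by
    apply Set.Subset.antisymm
    · intro s hs
      have h1 : s ∈ closure (Set.range ι) := hdense s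
      have h2 : (fun t : S => t * t) '' closure (Set.range ι) ⊆
          closure ((fun t : S => t * t) '' Set.range ι) :=
        image_closure_subset_closure_image hmulc
      have h3 : (fun t : S => t * t) '' Set.range ι ⊆ ι '' {x : GIS src rng | x * x = x} := by
        rintro _ ⟨_, ⟨x, rfl⟩, rfl⟩
        exact ⟨x * x, sq_idem hacyc x, by exact (hhom x x)⟩
      have h4 : (s : S) * s ∈ closure ((fun t : S => t * t) '' Set.range ι) :=
        h2 ⟨s, h1, rfl⟩
      rw [hs] at h4
      exact closure_mono h3 h4
    · exact closure_minimal hsub hIcl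
  refine ⟨hE, ?_⟩
  rw [isOpen_iff_forall_mem_open]
  rintro s ⟨hs, hs0⟩
  obtain ⟨U, W, hU, hW, hsU, h0W, hUW⟩ := t2_separation hs0
  have h0U : ι 0 ∉ U := fun hmem => Set.disjoint_left.mp hUW hmem h0W
  have hpre : IsOpen ((fun p : S × S => p.1 * p.2) ⁻¹' U) := hU.preimage hSmul
  have hmem : (s, s) ∈ (fun p : S × S => p.1 * p.2) ⁻¹' U := by
    show s * s ∈ U; rw [hs]; exact hsU
  obtain ⟨V1, V2, hV1, hV2, hsV1, hsV2, hVV⟩ := isOpen_prod_iff.mp hpre s s hmem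
  have hVopen : IsOpen (V1 ∩ V2 ∩ U) := (hV1.inter hV2).inter hU
  refine ⟨V1 ∩ V2 ∩ U, ?_, hVopen, ⟨⟨hsV1, hsV2⟩, hsU⟩⟩
  rintro t ht
  have htne : t ≠ ι 0 := fun h => h0U (h ▸ ht.2)
  refine ⟨?_, htne⟩
  have hsubV : (V1 ∩ V2 ∩ U) ∩ Set.range ι ⊆ {s : S | s * s = s} := by
    rintro _ ⟨⟨⟨hv1, hv2⟩, -⟩, x, rfl⟩
    have hmul : ι x * ι x ∈ U := hVV (show (ι x, ι x) ∈ V1 ×ˢ V2 from ⟨hv1, hv2⟩)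
    rw [← hhom] at hmul
    rcases sq_eq hacyc x with hx | hx
    · show ι x * ι x = ι x
      rw [← hhom, hx]
    · rw [hx] at hmul
      exact absurd hmul h0U
  have h5 : t ∈ closure ((V1 ∩ V2 ∩ U) ∩ Set.range ι) :=
    hVopen.inter_closure ⟨ht, hdense t⟩
  have h6 := closure_mono hsubV h5
  rwa [hIcl.closure_eq] at h6
end
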